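/- arXiv:1609.02829 — 8 statements merged into one kernel-verified Lean document; each statement's English description precedes it below -/
import Mathlib

section
/- The polynomial p(λ;a) = -λ·(λ+8)·(λ² + (32-8 sin a)λ + 128(1-sin a))·(λ² + (32+8 sin a)λ + 128(1+sin a))·(λ³ + 36λ² + (352-64 sin²a)λ + 512(1-sin²a)) has, for every a ∈ [0,π] with a ≠ π/2, exactly one root equal to 0 (counted with multiplicity), and all its other real roots are strictly negative. -/
open Polynomial

theorem stmt_4 (a : ℝ) (ha : a ∈ Set.Icc 0 Real.pi) (hne : a ≠ Real.pi / 2) :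
    let p : Polynomial ℝ :=
      -X * (X + C 8) *
        (X ^ 2 + C (32 - 8 * Real.sin a) * X + C (128 * (1 - Real.sin a))) *
        (X ^ 2 + C (32 + 8 * Real.sin a) * X + C (128 * (1 + Real.sin a))) *
        (X ^ 3 + C 36 * X ^ 2 + C (352 - 64 * Real.sin a ^ 2) * X +
          C (512 * (1 - Real.sin a ^ 2)))
    p.rootMultiplicity 0 = 1 ∧ ∀ x : ℝ, p.IsRoot x → x ≠ 0 → x < 0 := by
  obtain ⟨ha0, haπ⟩ := ha
  set s := Real.sin a with hs
  have hs0 : 0 ≤ s := Real.sin_nonneg_of_nonneg_of_le_pi ha0 haπ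
  have hs1 : s < 1 := by
    rcases lt_or_eq_of_le (Real.sin_le_one a) with h | h
    · exact h
    · exfalso
      obtain ⟨k, hk⟩ := Real.sin_eq_one_iff.mp h
      have hπ := Real.pi_pos
      have hk0 : (k : ℝ) = 0 := by
        have h1 : (-1 : ℤ) < k := by exact_mod_cast (by nlinarith : (-1 : ℝ) < k)
        have h2 : (k : ℤ) < 1 := by exact_mod_cast (by nlinarith : (k : ℝ) < 1)
        have : k = 0 := by omega
        exact_mod_cast this
      rw [hk0] at hk
      exact hne (by linarith)
  intro p
  have hs2 : s ^ 2 < 1 := by nlinarith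
  constructor
  · have hrw : p = X * (-((X + C 8) *
        (X ^ 2 + C (32 - 8 * s) * X + C (128 * (1 - s))) *
        (X ^ 2 + C (32 + 8 * s) * X + C (128 * (1 + s))) *
        (X ^ 3 + C 36 * X ^ 2 + C (352 - 64 * s ^ 2) * X + C (512 * (1 - s ^ 2))))) := by
      show -X * _ * _ * _ * _ = _
      ring
    set r : ℝ[X] := -((X + C 8) *
        (X ^ 2 + C (32 - 8 * s) * X + C (128 * (1 - s))) *
        (X ^ 2 + C (32 + 8 * s) * X + C (128 * (1 + s))) *
        (X ^ 3 + C 36 * X ^ 2 + C (352 - 64 * s ^ 2) * X + C (512 * (1 - s ^ 2)))) with hr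
    have h1 : (0:ℝ) < 1 - s := by linarith
    have h2 : (0:ℝ) < 1 + s := by linarith
    have h3 : (0:ℝ) < 1 - s ^ 2 := by nlinarith
    have hr0 : r.eval 0 ≠ 0 := by
      simp only [hr, eval_neg, eval_mul, eval_add, eval_pow, eval_X, eval_C]
      norm_num
      exact ⟨⟨by linarith, by linarith⟩, by linarith⟩
    have hrne : r ≠ 0 := fun h => hr0 (by simp [h])
    rw [hrw, rootMultiplicity_mul (mul_ne_zero X_ne_zero hrne),
      rootMultiplicity_eq_zero (p := r) (x := 0) (by simpa [IsRoot] using hr0)]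
    have : (X : ℝ[X]) = X - C 0 := by simp
    rw [this, rootMultiplicity_X_sub_C_self]
  · intro x hx hxne
    have hev : -x * (x + 8) *
        (x ^ 2 + (32 - 8 * s) * x + 128 * (1 - s)) *
        (x ^ 2 + (32 + 8 * s) * x + 128 * (1 + s)) *
        (x ^ 3 + 36 * x ^ 2 + (352 - 64 * s ^ 2) * x + 512 * (1 - s ^ 2)) = 0 := by
      have := hx
      simpa [p, IsRoot, eval_mul, eval_add, eval_pow] using this
    by_contra hxlt
    push_neg at hxlt
    have hx0 : 0 < x := lt_of_le_of_ne hxlt (Ne.symm hxne)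
    rcases mul_eq_zero.mp hev with h | h
    rcases mul_eq_zero.mp h with h | h
    rcases mul_eq_zero.mp h with h | h
    rcases mul_eq_zero.mp h with h | h
    · nlinarith
    · nlinarith
    · nlinarith
    · nlinarith
    · nlinarith
end

section
/- For a ∈ [0,π], the multiplicity of 0 as a root of p(λ;a) = -λ·(λ+8)·q₁(λ;a)·q₂(λ;a)·c(λ;a) equals 3 when a = π/2 and equals 1 otherwise, where q₁(λ;a) = λ² + (32-8 sin a)λ + 128(1-sin a), q₂(λ;a) = λ² + (32+8 sin a)λ + 128(1+sin a), and c(λ;a) = λ³ + 36λ² + (352-64 sin²a)λ + 512(1-sin²a). -/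
open Polynomial

lemma rm_neg {R : Type*} [CommRing R] [IsDomain R] (p : Polynomial R) (x : R) :
    (-p).rootMultiplicity x = p.rootMultiplicity x := by
  rcases eq_or_ne p 0 with h | h
  · simp [h]
  · have hC : (-p) = C (-1) * p := by rw [map_neg, map_one, neg_one_mul]
    rw [hC, rootMultiplicity_mul (hC ▸ neg_ne_zero.2 h), rootMultiplicity_C, zero_add]

lemma rm_X : (X : Polynomial ℝ).rootMultiplicity 0 = 1 := by
  have := rootMultiplicity_X_sub_C_self (x := (0:ℝ))
  simpa using this

lemma rm_notroot (p : Polynomial ℝ) (h : p.eval 0 ≠ 0) : p.rootMultiplicity 0 = 0 :=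
  rootMultiplicity_eq_zero h

theorem stmt_5 (a : ℝ) (ha : a ∈ Set.Icc 0 Real.pi) :
    let p : Polynomial ℝ :=
      -X * (X + C 8) *
        (X ^ 2 + C (32 - 8 * Real.sin a) * X + C (128 * (1 - Real.sin a))) *
        (X ^ 2 + C (32 + 8 * Real.sin a) * X + C (128 * (1 + Real.sin a))) *
        (X ^ 3 + C 36 * X ^ 2 + C (352 - 64 * Real.sin a ^ 2) * X +
          C (512 * (1 - Real.sin a ^ 2)))
    p.rootMultiplicity 0 = if a = Real.pi / 2 then 3 else 1 := by
  intro p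
  have hs0 : 0 ≤ Real.sin a := Real.sin_nonneg_of_nonneg_of_le_pi ha.1 ha.2
  have hs1 : Real.sin a ≤ 1 := Real.sin_le_one a
  have hiff : a = Real.pi / 2 ↔ Real.sin a = 1 := by
    constructor
    · rintro rfl; exact Real.sin_pi_div_two
    · intro h
      have hc : Real.cos a = 0 := by
        have h2 := Real.sin_sq_add_cos_sq a
        have h3 : Real.cos a ^ 2 = 0 := by nlinarith
        exact pow_eq_zero_iff (n := 2) (by norm_num) |>.mp h3
      have hmem : Real.pi / 2 ∈ Set.Icc (0:ℝ) Real.pi :=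
        ⟨by positivity, by linarith [Real.pi_pos]⟩
      exact Real.injOn_cos ha hmem (by rw [hc, Real.cos_pi_div_two])
  set s := Real.sin a with hsdef
  have h1 : (-X : Polynomial ℝ) ≠ 0 := neg_ne_zero.2 X_ne_zero
  have h2 : (X + C 8 : Polynomial ℝ) ≠ 0 := by
    intro h; have := congrArg (fun q => q.coeff 1) h; simp at this
  have hq1 : (X ^ 2 + C (32 - 8 * s) * X + C (128 * (1 - s)) : Polynomial ℝ) ≠ 0 := by
    intro h; have := congrArg (fun q => q.coeff 2) h
    simp only [coeff_add, coeff_C_mul, coeff_X_pow, coeff_C, coeff_X, coeff_zero] at this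
    norm_num at this
  have hq2 : (X ^ 2 + C (32 + 8 * s) * X + C (128 * (1 + s)) : Polynomial ℝ) ≠ 0 := by
    intro h; have := congrArg (fun q => q.coeff 2) h
    simp only [coeff_add, coeff_C_mul, coeff_X_pow, coeff_C, coeff_X, coeff_zero] at this
    norm_num at this
  have hc3 : (X ^ 3 + C 36 * X ^ 2 + C (352 - 64 * s ^ 2) * X + C (512 * (1 - s ^ 2))
      : Polynomial ℝ) ≠ 0 := by
    intro h; have := congrArg (fun q => q.coeff 3) h
    simp only [coeff_add, coeff_C_mul, coeff_X_pow, coeff_C, coeff_X, coeff_zero] at this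
    norm_num at this
  have hp : p ≠ 0 := by
    simp only [p]
    exact mul_ne_zero (mul_ne_zero (mul_ne_zero (mul_ne_zero h1 h2) hq1) hq2) hc3
  have hsplit : p.rootMultiplicity 0 =
      (-X : Polynomial ℝ).rootMultiplicity 0 +
      (X + C 8 : Polynomial ℝ).rootMultiplicity 0 +
      (X ^ 2 + C (32 - 8 * s) * X + C (128 * (1 - s)) : Polynomial ℝ).rootMultiplicity 0 +
      (X ^ 2 + C (32 + 8 * s) * X + C (128 * (1 + s)) : Polynomial ℝ).rootMultiplicity 0 +
      (X ^ 3 + C 36 * X ^ 2 + C (352 - 64 * s ^ 2) * X + C (512 * (1 - s ^ 2))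
        : Polynomial ℝ).rootMultiplicity 0 := by
    simp only [p] at hp ⊢
    rw [rootMultiplicity_mul hp,
      rootMultiplicity_mul (mul_ne_zero (mul_ne_zero (mul_ne_zero h1 h2) hq1) hq2),
      rootMultiplicity_mul (mul_ne_zero (mul_ne_zero h1 h2) hq1),
      rootMultiplicity_mul (mul_ne_zero h1 h2)]
  have hmX : (-X : Polynomial ℝ).rootMultiplicity 0 = 1 := by rw [rm_neg]; exact rm_X
  have hX8 : (X + C 8 : Polynomial ℝ).rootMultiplicity 0 = 0 := by
    apply rm_notroot; simp
  have hq2m : (X ^ 2 + C (32 + 8 * s) * X + C (128 * (1 + s)) : Polynomial ℝ).rootMultiplicity 0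
      = 0 := by
    apply rm_notroot; simp; intro h; nlinarith
  by_cases h : a = Real.pi / 2
  · have hs : s = 1 := hiff.mp h
    rw [if_pos h, hsplit, hmX, hX8, hq2m]
    have e1 : (X ^ 2 + C (32 - 8 * s) * X + C (128 * (1 - s)) : Polynomial ℝ)
        = X * (X + C 24) := by
      rw [hs]; norm_num; ring
    have e2 : (X ^ 3 + C 36 * X ^ 2 + C (352 - 64 * s ^ 2) * X + C (512 * (1 - s ^ 2))
        : Polynomial ℝ) = X * (X ^ 2 + C 36 * X + C 288) := by
      rw [hs]; norm_num; ring
    have hX24 : (X + C 24 : Polynomial ℝ) ≠ 0 := by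
      intro hh; have := congrArg (fun q => q.coeff 1) hh; simp at this
    have hquad : (X ^ 2 + C 36 * X + C 288 : Polynomial ℝ) ≠ 0 := by
      intro hh; have := congrArg (fun q => q.coeff 2) hh
      simp only [coeff_add, coeff_C_mul, coeff_X_pow, coeff_C, coeff_X, coeff_zero] at this
      norm_num at this
    rw [e1, e2, rootMultiplicity_mul (mul_ne_zero X_ne_zero hX24),
      rootMultiplicity_mul (mul_ne_zero X_ne_zero hquad),
      rm_X, rm_notroot (X + C 24) (by simp), rm_notroot _ (by simp)]
  · have hs : s ≠ 1 := fun hh => h (hiff.mpr hh)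
    have hslt : s < 1 := lt_of_le_of_ne hs1 hs
    rw [if_neg h, hsplit, hmX, hX8, hq2m]
    rw [rm_notroot _ (by simp; nlinarith), rm_notroot _ (by simp; intro hh; nlinarith)]
end

section
/- Consider the cubic vector field on ℝ³ given by ṫ₁ = -(20/9)t₁t₂² - (20/9)t₁t₃² + (4/9)t₂t₁² + (4/9)t₂t₃² + (4/9)t₃t₁² + (4/9)t₃t₂², with ṫ₂ and ṫ₃ defined by cyclically analogous formulas (swap the roles of the indices accordingly). A point (t₁,t₂,t₃) ∈ ℝ³ is an equilibrium of this system if and only if at most one of t₁, t₂, t₃ is nonzero. -/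
set_option maxHeartbeats 800000

private lemma cube0 {x : ℝ} (h : x^3 = 0) : x = 0 := by
  have := pow_eq_zero_iff (n := 3) (by norm_num) |>.mp h
  exact this

private lemma quart0 {x : ℝ} (h : x^4 = 0) : x = 0 := by
  have := pow_eq_zero_iff (n := 4) (by norm_num) |>.mp h
  exact this

theorem stmt_6 (t₁ t₂ t₃ : ℝ) :
    (-(20/9)*t₁*t₂^2 - (20/9)*t₁*t₃^2 + (4/9)*t₂*t₁^2 + (4/9)*t₂*t₃^2 + (4/9)*t₃*t₁^2 + (4/9)*t₃*t₂^2 = 0 ∧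
     -(20/9)*t₂*t₁^2 - (20/9)*t₂*t₃^2 + (4/9)*t₁*t₂^2 + (4/9)*t₁*t₃^2 + (4/9)*t₃*t₁^2 + (4/9)*t₃*t₂^2 = 0 ∧
     -(20/9)*t₃*t₁^2 - (20/9)*t₃*t₂^2 + (4/9)*t₁*t₂^2 + (4/9)*t₁*t₃^2 + (4/9)*t₂*t₁^2 + (4/9)*t₂*t₃^2 = 0)
    ↔ ((t₁ = 0 ∧ t₂ = 0) ∨ (t₁ = 0 ∧ t₃ = 0) ∨ (t₂ = 0 ∧ t₃ = 0)) := by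
  constructor
  · rintro ⟨h1, h2, h3⟩
    have d12 : (t₁ - t₂) * (t₁*t₂ - t₃^2) = 0 := by linear_combination (3/8)*h1 - (3/8)*h2
    have d13 : (t₁ - t₃) * (t₁*t₃ - t₂^2) = 0 := by linear_combination (3/8)*h1 - (3/8)*h3
    have d23 : (t₂ - t₃) * (t₂*t₃ - t₁^2) = 0 := by linear_combination (3/8)*h2 - (3/8)*h3
    rcases mul_eq_zero.mp d12 with a12 | b12 <;>
      rcases mul_eq_zero.mp d13 with a13 | b13 <;>
        rcases mul_eq_zero.mp d23 with a23 | b23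
    · -- a12 a13 a23
      have ht : t₁ = 0 := cube0 (by linear_combination (-3/8)*h1
        + ((-5/6)*t₃^2 + (-1/2)*t₂*t₃ + (1/6)*t₁*t₃ + (7/6)*t₁*t₂ + t₁^2)*a12
        + ((2/3)*t₂*t₃ + (1/3)*t₂^2)*a13)
      exact Or.inl ⟨ht, by linarith⟩
    · -- a12 a13 b23
      have ht : t₁ = 0 := cube0 (by linear_combination (-3/8)*h1
        + ((-5/6)*t₃^2 + (-1/2)*t₂*t₃ + (1/6)*t₁*t₃ + (7/6)*t₁*t₂ + t₁^2)*a12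
        + ((2/3)*t₂*t₃ + (1/3)*t₂^2)*a13)
      exact Or.inl ⟨ht, by linarith⟩
    · -- a12 b13 a23
      have ht : t₁ = 0 := cube0 (by linear_combination (-3/8)*h1
        + ((-5/6)*t₃^2 + (1/6)*t₂*t₃ + (1/3)*t₂^2 + (1/6)*t₁*t₃ + (7/6)*t₁*t₂ + t₁^2)*a12
        + ((2/3)*t₂*t₃ + (1/3)*t₂^2)*a23)
      exact Or.inl ⟨ht, by linarith⟩
    · -- a12 b13 b23
      have ht : t₁ = 0 := cube0 (by linear_combination (-3/8)*h1
        + ((-1/6)*t₃^2 + (1/2)*t₂*t₃ + (1/3)*t₂^2 + (1/6)*t₁*t₃ + (7/6)*t₁*t₂ + t₁^2)*a12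
        + ((-2/3)*t₃ + (-1/3)*t₂)*b13)
      exact Or.inl ⟨ht, by linarith⟩
    · -- b12 a13 a23
      have ht : t₁ = 0 := cube0 (by linear_combination (-3/8)*h1
        + ((1/3)*t₃^2 + (1/6)*t₂*t₃ + (-5/6)*t₂^2 + (7/6)*t₁*t₃ + (1/6)*t₁*t₂ + t₁^2)*a13
        + ((-1/3)*t₃^2 + (-2/3)*t₂*t₃)*a23)
      exact Or.inr (Or.inl ⟨ht, by linarith⟩)
    · -- b12 a13 b23
      have ht : t₁ = 0 := cube0 (by linear_combination (-3/8)*h1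
        + ((-1/2)*t₃ + (-2/3)*t₂ + (1/6)*t₁)*b12
        + ((1/2)*t₃^2 + (1/2)*t₂*t₃ + (-1/6)*t₂^2 + (7/6)*t₁*t₃ + t₁^2)*a13)
      exact Or.inr (Or.inl ⟨ht, by linarith⟩)
    · -- b12 b13 a23
      have ht : t₂ = 0 := cube0 (by linear_combination (-3/8)*h2
        + ((-1/2)*t₃ + (1/6)*t₂ + (-2/3)*t₁)*b12
        + ((1/2)*t₃^2 + (7/6)*t₂*t₃ + t₂^2 + (1/2)*t₁*t₃ + (-1/6)*t₁^2)*a23)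
      exact Or.inr (Or.inr ⟨ht, by linarith⟩)
    · -- b12 b13 b23
      have h1' : t₁ = 0 := quart0 (by linear_combination ((-3/8)*t₃ + (-3/8)*t₂ + (3/8)*t₁)*h1
        + ((-1/6)*t₂*t₃ + (-5/6)*t₂^2 + (4/3)*t₁*t₃ + (5/6)*t₁*t₂ + (-1/6)*t₁^2)*b12
        + ((1/2)*t₃^2 + (-1/6)*t₂*t₃ + (5/6)*t₁*t₃ + (-1/6)*t₁^2)*b13
        + (-t₁^2)*b23)
      have h2' : t₂ = 0 := quart0 (by linear_combination ((-7/16)*t₃ + (1/16)*t₂ + (-1/4)*t₁)*h1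
        + ((-1/16)*t₃ + (1/4)*t₂ + (-1/16)*t₁)*h2
        + ((1/8)*t₃ + (1/16)*t₂ + (-1/16)*t₁)*h3
        + ((-1)*t₃^2 + (-1)*t₂^2)*b13)
      exact Or.inl ⟨h1', h2'⟩
  · rintro (⟨h1, h2⟩ | ⟨h1, h2⟩ | ⟨h1, h2⟩) <;> subst h1 <;> subst h2 <;>
      refine ⟨by ring, by ring, by ring⟩
end

section
/- For every real c, the matrix D₆(c) := D₆ ∘ EXP(i·R(c)) satisfies D₆(c)·D₆(c)* = 6·I, where D₆ is the Diţă Hadamard matrix with rows (1,1,1,1,1,1), (1,-1,i,-i,-i,i), (1,i,-1,i,-i,-i), (1,-i,i,-1,i,-i), (1,-i,-i,i,-1,i), (1,i,-i,-i,i,-1), and R(c) is the 6×6 real matrix that is zero except: rows 3 and 6 have entries c in columns 4 and 5, and rows 4 and 5 have entries -c in columns 3 and 6. -/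
open Complex Matrix

set_option maxHeartbeats 2000000 in
theorem stmt_8 (c : ℝ) :
    let D₆ : Matrix (Fin 6) (Fin 6) ℂ :=
      !![1,  1,  1,  1,  1,  1;
         1, -1,  I, -I, -I,  I;
         1,  I, -1,  I, -I, -I;
         1, -I,  I, -1,  I, -I;
         1, -I, -I,  I, -1,  I;
         1,  I, -I, -I,  I, -1]
    let R : Matrix (Fin 6) (Fin 6) ℝ :=
      !![0, 0,  0, 0, 0,  0;
         0, 0,  0, 0, 0,  0;
         0, 0,  0, c, c,  0;
         0, 0, -c, 0, 0, -c;
         0, 0, -c, 0, 0, -c;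
         0, 0,  0, c, c,  0]
    let D₆c : Matrix (Fin 6) (Fin 6) ℂ :=
      Matrix.of fun j k => D₆ j k * Complex.exp (I * (R j k : ℝ))
    D₆c * D₆cᴴ = (6 : ℂ) • 1 := by
  intro D₆ R D₆c
  have key : Complex.exp (I * c) * Complex.exp (-(I * c)) = 1 := by
    rw [← Complex.exp_add]; simp
  have hsq : (I : ℂ) ^ 2 = -1 := Complex.I_sq
  have h5 : ∀ {α : Type} (a b d e f g : α), ![a,b,d,e,f,g] (5 : Fin 6) = g := fun _ _ _ _ _ _ => rfl
  ext i j
  fin_cases i <;> fin_cases j <;>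
    simp (config := { decide := true }) [D₆c, D₆, R, Matrix.mul_apply, Fin.sum_univ_six, star_mul', Complex.star_def,
      ← Complex.exp_conj, Matrix.cons_val_four, show (5:Fin 6) = Fin.succ 4 from rfl, Matrix.cons_val_succ, Matrix.one_apply] <;>
    (first
      | ring1
      | linear_combination (2*I^2 : ℂ) * key + 2 * hsq
      | linear_combination (-(2*I^2) : ℂ) * key - 2 * hsq)
end

section
/- Suppose a ↦ H(a) is a differentiable curve of d×d complex matrices with H(a) = H ∘ EXP(i·R(a)), where R(a) is a differentiable curve of real d×d matrices with R(0) = 0, and H(a)·H(a)* = d·I for all a in a neighborhood of 0. Then the matrix R'(0) satisfies, for all 1 ≤ j < k ≤ d: Σ_{m=1}^{d} H_{j,m}·conj(H_{k,m})·(R'(0)_{j,m} - R'(0)_{k,m}) = 0. -/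
open Matrix

/-!
The off-diagonal entry `(j, k)` of `H(a) H(a)*` vanishes identically near `a = 0`, and it equals
`∑ m, H j m * conj (H k m) * exp (I * (R a j m - R a k m))`. Differentiating at `a = 0`, where
every phase is `1`, gives `I` times the sum in question.
-/

section

open Complex

theorem mul_exp_I_mul_mul_conj_mul_exp_I_mul (b c : ℂ) (x y : ℝ) :
    b * exp (I * x) * (starRingEnd ℂ) (c * exp (I * y)) =
      b * (starRingEnd ℂ) c * exp (I * ↑(x - y)) := by
  rw [map_mul, ← exp_conj, map_mul, conj_I, conj_ofReal, ofReal_sub, mul_sub, sub_eq_add_neg,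
    exp_add, ← neg_mul]
  ring

theorem phase_mul_conjTranspose_phase_apply {n : Type*} [Fintype n] (H : Matrix n n ℂ)
    (R : Matrix n n ℝ) (j k : n) :
    ((of fun j k => H j k * exp (I * R j k)) * (of fun j k => H j k * exp (I * R j k))ᴴ) j k =
      ∑ m, H j m * (starRingEnd ℂ) (H k m) * exp (I * ↑(R j m - R k m)) := by
  simp only [mul_apply, conjTranspose_apply, of_apply, star_def,
    mul_exp_I_mul_mul_conj_mul_exp_I_mul]

theorem hasDerivAt_sum_mul_exp_I_mul {ι : Type*} (s : Finset ι) (b : ι → ℂ) {r : ι → ℝ → ℝ}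
    {r' : ι → ℝ} {t : ℝ} (hr : ∀ m ∈ s, HasDerivAt (r m) (r' m) t) :
    HasDerivAt (fun a => ∑ m ∈ s, b m * exp (I * r m a))
      (∑ m ∈ s, b m * (exp (I * r m t) * (I * r' m))) t :=
  HasDerivAt.fun_sum fun m hm =>
    (((hr m hm).ofReal_comp.const_mul I).cexp).const_mul (b m)

end

theorem stmt_11 (d : ℕ) (H : Matrix (Fin d) (Fin d) ℂ)
    (R : ℝ → Matrix (Fin d) (Fin d) ℝ)
    (hdiff : ∀ j k : Fin d, Differentiable ℝ fun a => R a j k)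
    (hR0 : R 0 = 0)
    (hHad : ∀ᶠ a in nhds (0 : ℝ),
      (Matrix.of fun j k => H j k * Complex.exp (Complex.I * (R a j k : ℝ))) *
          (Matrix.of fun j k => H j k * Complex.exp (Complex.I * (R a j k : ℝ)))ᴴ =
        (d : ℂ) • 1)
    (j k : Fin d) (hjk : j < k) :
    ∑ m : Fin d, H j m * (starRingEnd ℂ) (H k m) *
      ((deriv (fun a => R a j m) 0 : ℝ) - (deriv (fun a => R a k m) 0 : ℝ)) = 0 := by
  have hderiv := hasDerivAt_sum_mul_exp_I_mul Finset.univ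
    (fun m => H j m * (starRingEnd ℂ) (H k m))
    fun m _ => (hdiff j m 0).hasDerivAt.fun_sub (hdiff k m 0).hasDerivAt
  have hoff : (fun a => ∑ m, H j m * (starRingEnd ℂ) (H k m) *
      Complex.exp (Complex.I * ↑(R a j m - R a k m))) =ᶠ[nhds 0] fun _ => 0 := by
    filter_upwards [hHad] with a ha
    simpa [phase_mul_conjTranspose_phase_apply, one_apply_ne hjk.ne] using congr_fun₂ ha j k
  have hzero := hderiv.unique ((hasDerivAt_const 0 0).congr_of_eventuallyEq hoff)
  simp only [hR0, Matrix.zero_apply, sub_self, Complex.ofReal_zero, mul_zero, Complex.exp_zero,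
    one_mul] at hzero
  simpa [← Finset.mul_sum, mul_left_comm _ Complex.I, Complex.I_ne_zero] using hzero
end

section
/- For all real a and b, the 10×10 matrix M₁₀⁽²⁾(a,b) with rows (1,1,1,1,1,1,1,1,1,1), (1, i, ie^{ib}, e^{ib}, -i, -e^{ib}, e^{ib}, -ie^{ib}, -e^{ib}, -1), (1, -1, -ie^{ib}, -e^{ia}, e^{ia}, ie^{ib}, -ie^{ia}, e^{ia}, -e^{ia}, ie^{ia}), (1, i, -i, -ie^{ia}, i, -i, ie^{ia}, -1, -1, 1), (1, 1, i, -1, i, i, -1, -i, -i, -i), (1, -i, -1, e^{ia}, 1, -1, -e^{ia}, -1, 1, i), (1, i, e^{ib}, -e^{ib}, -i, -ie^{ib}, -e^{ib}, ie^{ib}, e^{ib}, -1), (1, -1, -ie^{ib}, ie^{ia}, -e^{ia}, ie^{ib}, e^{ia}, -e^{ia}, e^{ia}, -ie^{ia}), (1, -i, ie^{ib}, ie^{ia}, -1, -ie^{ib}, -ie^{ia}, i, -1, 1), (1, -i, -e^{ib}, -ie^{ia}, -1, e^{ib}, ie^{ia}, 1, i, -1) satisfies M₁₀⁽²⁾(a,b)·M₁₀⁽²⁾(a,b)*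 = 10·I. -/
open Complex Matrix

namespace MyVec
variable {α : Type*} {m : ℕ}
@[simp] lemma cons_val_five (x : α) (u : Fin m.succ.succ.succ.succ.succ → α) :
    Matrix.vecCons x u 5 = vecHead (vecTail (vecTail (vecTail (vecTail u)))) := rfl
@[simp] lemma cons_val_six (x : α) (u : Fin m.succ.succ.succ.succ.succ.succ → α) :
    Matrix.vecCons x u 6 = vecHead (vecTail (vecTail (vecTail (vecTail (vecTail u))))) := rfl
@[simp] lemma cons_val_seven (x : α) (u : Fin m.succ.succ.succ.succ.succ.succ.succ → α) :
    Matrix.vecCons x u 7 = vecHead (vecTail (vecTail (vecTail (vecTail (vecTail (vecTail u)))))) := rfl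
@[simp] lemma cons_val_eight (x : α) (u : Fin m.succ.succ.succ.succ.succ.succ.succ.succ → α) :
    Matrix.vecCons x u 8 = vecHead (vecTail (vecTail (vecTail (vecTail (vecTail (vecTail (vecTail u))))))) := rfl
@[simp] lemma cons_val_nine (x : α) (u : Fin m.succ.succ.succ.succ.succ.succ.succ.succ.succ → α) :
    Matrix.vecCons x u 9 = vecHead (vecTail (vecTail (vecTail (vecTail (vecTail (vecTail (vecTail (vecTail u)))))))) := rfl
end MyVec

set_option maxHeartbeats 4000000 in
theorem stmt_16 (a b : ℝ) :
    let A : ℂ := Complex.exp (I * a)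
    let B : ℂ := Complex.exp (I * b)
    let M : Matrix (Fin 10) (Fin 10) ℂ :=
      !![1,  1,    1,    1,    1,  1,    1,    1,    1,   1;
         1,  I,  I*B,    B,   -I, -B,    B, -I*B,   -B,  -1;
         1, -1, -I*B,   -A,    A, I*B, -I*A,   A,   -A, I*A;
         1,  I,   -I, -I*A,    I, -I,  I*A,  -1,   -1,   1;
         1,  1,    I,   -1,    I,  I,   -1,  -I,   -I,  -I;
         1, -I,   -1,    A,    1, -1,   -A,  -1,    1,   I;
         1,  I,    B,   -B,   -I, -I*B, -B,  I*B,   B,  -1;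
         1, -1, -I*B,  I*A,   -A, I*B,   A,  -A,    A, -I*A;
         1, -I,  I*B,  I*A,   -1, -I*B, -I*A, I,   -1,   1;
         1, -I,   -B, -I*A,   -1,  B,  I*A,   1,    I,  -1]
    M * Mᴴ = (10 : ℂ) • 1 := by
  intro A B M
  have hA0 : A ≠ 0 := Complex.exp_ne_zero _
  have hB0 : B ≠ 0 := Complex.exp_ne_zero _
  have hA : starRingEnd ℂ A = A⁻¹ := by
    rw [← Complex.exp_conj, ← Complex.exp_neg]; congr 1; simp
  have hB : starRingEnd ℂ B = B⁻¹ := by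
    rw [← Complex.exp_conj, ← Complex.exp_neg]; congr 1; simp
  ext i j
  fin_cases i <;> fin_cases j <;>
    · simp [Matrix.mul_apply, Fin.sum_univ_succ, Matrix.conjTranspose_apply, M,
        hA, hB, Complex.conj_I, Matrix.one_apply]
      try field_simp
      try ring_nf
      try simp [Complex.I_sq, ← mul_pow, mul_inv_cancel₀ hA0, mul_inv_cancel₀ hB0]
      try ring_nf
      try field_simp
      try ring
end

section
/- For every real a, the 10×10 matrix M₁₀⁽¹⁾(a) with rows (1,1,1,1,1,1,1,1,1,1), (1, ie^{-ia}, i, e^{-ia}, -ie^{-ia}, -1, 1, -i, -1, -e^{-ia}), (1, -1, -i, -e^{-ia}, e^{-ia}, i, -i, 1, -1, i), (1, i, -i, -ie^{-ia}, ie^{-ia}, -i, i, -1, -1, 1), (1, 1, ie^{ia}, -1, i, i, -1, -ie^{ia}, -i, -i), (1, -i, -1, 1, 1, -1, -1, -1, 1, i), (1, i, e^{ia}, -1, -i, -ie^{ia}, -e^{ia}, ie^{ia}, 1, -1), (1, -1, -ie^{ia}, i, -1, ie^{ia}, e^{ia}, -e^{ia}, 1, -i), (1, -ie^{-ia}, i,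 ie^{-ia}, -e^{-ia}, -i, -i, i, -1, e^{-ia}), (1, -i, -e^{ia}, -i, -1, 1, i, e^{ia}, i, -1) satisfies M₁₀⁽¹⁾(a)·M₁₀⁽¹⁾(a)* = 10·I. -/
open Complex Matrix


section aux
variable {α : Type*} {m : ℕ}
theorem my_cons_val_five (x : α) (u : Fin m.succ.succ.succ.succ.succ → α) :
    Matrix.vecCons x u 5 = Matrix.vecHead (Matrix.vecTail (Matrix.vecTail (Matrix.vecTail (Matrix.vecTail u)))) := rfl
theorem my_cons_val_six (x : α) (u : Fin m.succ.succ.succ.succ.succ.succ → α) :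
    Matrix.vecCons x u 6 = Matrix.vecHead (Matrix.vecTail (Matrix.vecTail (Matrix.vecTail (Matrix.vecTail (Matrix.vecTail u))))) := rfl
theorem my_cons_val_seven (x : α) (u : Fin m.succ.succ.succ.succ.succ.succ.succ → α) :
    Matrix.vecCons x u 7 = Matrix.vecHead (Matrix.vecTail (Matrix.vecTail (Matrix.vecTail (Matrix.vecTail (Matrix.vecTail (Matrix.vecTail u)))))) := rfl
theorem my_cons_val_eight (x : α) (u : Fin m.succ.succ.succ.succ.succ.succ.succ.succ → α) :
    Matrix.vecCons x u 8 = Matrix.vecHead (Matrix.vecTail (Matrix.vecTail (Matrix.vecTail (Matrix.vecTail (Matrix.vecTail (Matrix.vecTail (Matrix.vecTail u))))))) := rfl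
theorem my_cons_val_nine (x : α) (u : Fin m.succ.succ.succ.succ.succ.succ.succ.succ.succ → α) :
    Matrix.vecCons x u 9 = Matrix.vecHead (Matrix.vecTail (Matrix.vecTail (Matrix.vecTail (Matrix.vecTail (Matrix.vecTail (Matrix.vecTail (Matrix.vecTail (Matrix.vecTail u)))))))) := rfl
end aux

set_option maxHeartbeats 0 in
theorem stmt_17 (a : ℝ) :
    let E : ℂ := Complex.exp (I * a)
    let F : ℂ := Complex.exp (-(I * a))
    let M : Matrix (Fin 10) (Fin 10) ℂ :=
      !![1,    1,    1,    1,    1,   1,  1,    1,   1,  1;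
         1,  I*F,    I,    F, -I*F,  -1,  1,   -I,  -1, -F;
         1,   -1,   -I,   -F,    F,   I, -I,    1,  -1,  I;
         1,    I,   -I, -I*F,  I*F,  -I,  I,   -1,  -1,  1;
         1,    1,  I*E,   -1,    I,   I, -1, -I*E,  -I, -I;
         1,   -I,   -1,    1,    1,  -1, -1,   -1,   1,  I;
         1,    I,    E,   -1,   -I, -I*E, -E, I*E,   1, -1;
         1,   -1, -I*E,    I,   -1, I*E,  E,   -E,   1, -I;
         1, -I*F,    I,  I*F,   -F,  -I, -I,    I,  -1,  F;
         1,   -I,   -E,   -I,   -1,   1,  I,    E,   I, -1]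
    M * Mᴴ = (10 : ℂ) • 1 := by
  have hE : (starRingEnd ℂ) (Complex.exp (I * a)) = Complex.exp (-(I * a)) := by
    rw [← Complex.exp_conj]; congr 1; simp [Complex.conj_ofReal]
  have hF : (starRingEnd ℂ) (Complex.exp (-(I * a))) = Complex.exp (I * a) := by
    rw [← Complex.exp_conj]; congr 1; simp [Complex.conj_ofReal]
  have hne : Complex.exp (I * a) ≠ 0 := Complex.exp_ne_zero _
  intro E F M
  ext i j
  fin_cases i <;> fin_cases j <;>
    simp [M, E, F, Matrix.mul_apply, Fin.sum_univ_succ, Matrix.one_apply, hE, hF,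
      my_cons_val_five, my_cons_val_six, my_cons_val_seven, my_cons_val_eight, my_cons_val_nine,
      Complex.exp_neg] <;>
    (try field_simp) <;> ring_nf <;>
    (try simp only [Complex.I_sq]) <;> (try field_simp [hne]) <;> (try ring_nf)
end

section
/- Let H be a d×d complex Hadamard matrix and suppose the real linear system R_{1,j} = 0 (1 ≤ j ≤ d), R_{i,1} = 0 (2 ≤ i ≤ d), and Σ_{m=1}^d H_{j,m}·conj(H_{k,m})·(R_{j,m} - R_{k,m}) = 0 (1 ≤ j < k ≤ d) in the real matrix variable R has only the trivial solution R = 0. Then for any differentiable curve R(t) of real d×d matrices with R(0) = 0, first row and column identically zero, such that H ∘ EXP(iR(t)) is Hadamard for all t near 0, one has R'(0) = 0. -/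
/-!
Differentiating the Hadamard condition `(H ∘ EXP(iR t)) (H ∘ EXP(iR t))ᴴ = d • 1` at `t = 0`
shows that `R'(0)` solves the defect system, whose only solution is `0`.
-/

open Matrix Filter Topology

section PhaseTwist

variable {n : Type*} [Fintype n]

/-- The matrix `H ∘ EXP(iR)`. -/
noncomputable def phaseTwist (H : Matrix n n ℂ) (R : Matrix n n ℝ) : Matrix n n ℂ :=
  of fun j k => H j k * Complex.exp (Complex.I * R j k)

lemma mul_conjTranspose_phaseTwist_apply (H : Matrix n n ℂ) (R : Matrix n n ℝ) (j k : n) :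
    (phaseTwist H R * (phaseTwist H R)ᴴ) j k =
      ∑ m, H j m * starRingEnd ℂ (H k m) * Complex.exp (Complex.I * (R j m - R k m)) := by
  rw [mul_apply]
  refine Finset.sum_congr rfl fun m _ => ?_
  have hconj : starRingEnd ℂ (Complex.exp (Complex.I * R k m)) =
      Complex.exp (-(Complex.I * R k m)) := by
    rw [← Complex.exp_conj, map_mul, Complex.conj_I, Complex.conj_ofReal, neg_mul]
  simp only [phaseTwist, conjTranspose_apply, of_apply, RCLike.star_def, map_mul, hconj]
  rw [mul_sub, sub_eq_add_neg, Complex.exp_add]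
  ring

lemma hasDerivAt_mul_conjTranspose_phaseTwist_apply (H : Matrix n n ℂ) {R : ℝ → Matrix n n ℝ}
    {R' : Matrix n n ℝ} {t₀ : ℝ} (hR : ∀ j k, HasDerivAt (fun t => R t j k) (R' j k) t₀)
    (hR₀ : R t₀ = 0) (j k : n) :
    HasDerivAt (fun t => (phaseTwist H (R t) * (phaseTwist H (R t))ᴴ) j k)
      (Complex.I * ∑ m, H j m * starRingEnd ℂ (H k m) * (R' j m - R' k m)) t₀ := by
  simp only [mul_conjTranspose_phaseTwist_apply, Finset.mul_sum]
  refine HasDerivAt.fun_sum fun m _ => ?_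
  have hphase := (((hR j m).ofReal_comp.fun_sub (hR k m).ofReal_comp).const_mul Complex.I).cexp
  have hzero : ∀ j k, R t₀ j k = 0 := fun j k => by rw [hR₀, Matrix.zero_apply]
  simp only [hzero, Complex.ofReal_zero, sub_zero, mul_zero, Complex.exp_zero,
    one_mul] at hphase
  exact (hphase.const_mul (H j m * starRingEnd ℂ (H k m))).congr_deriv (by ring)

lemma sum_mul_conj_mul_sub_eq_zero_of_eventually_eq (H G : Matrix n n ℂ) {R : ℝ → Matrix n n ℝ}
    {R' : Matrix n n ℝ} {t₀ : ℝ} (hR : ∀ j k, HasDerivAt (fun t => R t j k) (R' j k) t₀)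
    (hR₀ : R t₀ = 0) (hG : ∀ᶠ t in 𝓝 t₀, phaseTwist H (R t) * (phaseTwist H (R t))ᴴ = G)
    (j k : n) :
    ∑ m, H j m * starRingEnd ℂ (H k m) * (R' j m - R' k m) = 0 := by
  have hconst : HasDerivAt (fun t => (phaseTwist H (R t) * (phaseTwist H (R t))ᴴ) j k) 0 t₀ :=
    (hasDerivAt_const t₀ (G j k)).congr_of_eventuallyEq
      (hG.mono fun t ht => congrFun (congrFun ht j) k)
  have hvel := (hasDerivAt_mul_conjTranspose_phaseTwist_apply H hR hR₀ j k).unique hconst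
  exact (mul_eq_zero.mp hvel).resolve_left Complex.I_ne_zero

end PhaseTwist

theorem stmt_19_general (d : ℕ) (H : Matrix (Fin d) (Fin d) ℂ)
    (hd : 0 < d)
    (hdefect : ∀ R : Matrix (Fin d) (Fin d) ℝ,
      (∀ j : Fin d, R ⟨0, hd⟩ j = 0) → (∀ i : Fin d, R i ⟨0, hd⟩ = 0) →
      (∀ j k : Fin d, j < k →
        ∑ m : Fin d, H j m * (starRingEnd ℂ) (H k m) * ((R j m : ℝ) - (R k m : ℝ)) = 0) →
      R = 0)
    (R : ℝ → Matrix (Fin d) (Fin d) ℝ)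
    (hdiff : ∀ j k : Fin d, Differentiable ℝ fun t => R t j k)
    (hR0 : R 0 = 0)
    (hrow : ∀ t : ℝ, ∀ j : Fin d, R t ⟨0, hd⟩ j = 0)
    (hcol : ∀ t : ℝ, ∀ i : Fin d, R t i ⟨0, hd⟩ = 0)
    (hHadcurve : ∀ᶠ t in nhds (0 : ℝ),
      (Matrix.of fun j k => H j k * Complex.exp (Complex.I * (R t j k : ℝ))) *
          (Matrix.of fun j k => H j k * Complex.exp (Complex.I * (R t j k : ℝ)))ᴴ =
        (d : ℂ) • 1) :
    (Matrix.of fun j k => deriv (fun t => R t j k) 0) = (0 : Matrix (Fin d) (Fin d) ℝ) := by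
  apply hdefect
  · intro j
    simp only [of_apply, funext fun t => hrow t j, deriv_const]
  · intro i
    simp only [of_apply, funext fun t => hcol t i, deriv_const]
  · intro j k _
    exact sum_mul_conj_mul_sub_eq_zero_of_eventually_eq H _
      (fun j k => (hdiff j k 0).hasDerivAt) hR0 hHadcurve j k

theorem stmt_19 (d : ℕ) (H : Matrix (Fin d) (Fin d) ℂ)
    (hd : 0 < d)
    (hunimod : ∀ j k : Fin d, ‖H j k‖ = 1)
    (hHad : H * Hᴴ = (d : ℂ) • 1)
    (hdefect : ∀ R : Matrix (Fin d) (Fin d) ℝ,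
      (∀ j : Fin d, R ⟨0, hd⟩ j = 0) → (∀ i : Fin d, R i ⟨0, hd⟩ = 0) →
      (∀ j k : Fin d, j < k →
        ∑ m : Fin d, H j m * (starRingEnd ℂ) (H k m) * ((R j m : ℝ) - (R k m : ℝ)) = 0) →
      R = 0)
    (R : ℝ → Matrix (Fin d) (Fin d) ℝ)
    (hdiff : ∀ j k : Fin d, Differentiable ℝ fun t => R t j k)
    (hR0 : R 0 = 0)
    (hrow : ∀ t : ℝ, ∀ j : Fin d, R t ⟨0, hd⟩ j = 0)
    (hcol : ∀ t : ℝ, ∀ i : Fin d, R t i ⟨0, hd⟩ = 0)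
    (hHadcurve : ∀ᶠ t in nhds (0 : ℝ),
      (Matrix.of fun j k => H j k * Complex.exp (Complex.I * (R t j k : ℝ))) *
          (Matrix.of fun j k => H j k * Complex.exp (Complex.I * (R t j k : ℝ)))ᴴ =
        (d : ℂ) • 1) :
    (Matrix.of fun j k => deriv (fun t => R t j k) 0) = (0 : Matrix (Fin d) (Fin d) ℝ) :=
  stmt_19_general d H hd hdefect R hdiff hR0 hrow hcol hHadcurve
end
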